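/- arXiv:1905.08127 — 2 statements merged into one kernel-verified Lean document; each statement's English description precedes it below -/
import Mathlib

section
/- Let V be a finite type, M ≥ 1 an integer, w : V → V → ℤ with |w u v| ≤ M for all u ≠ v, H = 10M, and let w₆ be the six-layer graph on V × Fin 6. Then for every v : V, dist_{w₆}((v,0),(v,5)) = ⨅ over pairs (u,z) with v, u, z pairwise distinct of (5H + w v u + w u z + w z v) (a positive integer for each such pair, with the infimum over an empty index set being ⊤). In particular this distance equals 5H plus the minimum total weight of a triangle of w containing v. -/
/-- Weight of a walk starting at `u` and visiting the vertices of `p` in order. -/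
def walkWeight {V : Type*} (w : V → V → ℕ∞) : V → List V → ℕ∞
  | _, [] => 0
  | u, x :: xs => w u x + walkWeight w x xs

/-- Shortest-path distance: infimum of weights of walks from `u` to `v`. -/
noncomputable def gdist {V : Type*} (w : V → V → ℕ∞) (u v : V) : ℕ∞ :=
  ⨅ (p : List V) (_ : (u :: p).getLast (List.cons_ne_nil u p) = v), walkWeight w u p

/-- Eccentricity of a vertex. -/
noncomputable def ecc {V : Type*} (w : V → V → ℕ∞) (v : V) : ℕ∞ :=
  ⨆ u, gdist w v u

/-- Radius. -/
noncomputable def rad {V : Type*} (w : V → V → ℕ∞) : ℕ∞ :=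
  ⨅ v, ecc w v

/-- Diameter. -/
noncomputable def diam {V : Type*} (w : V → V → ℕ∞) : ℕ∞ :=
  ⨆ v, ecc w v

/-- Six-layer graph on `V × Fin 6` (parts X, A, B, C, D, Y), with `H = 10 * M`:
edges `(v,0) → (v,1)` and `(v,4) → (v,5)` of weight `H`; edges `(u,i) → (v,i+1)` of
weight `H + w u v` for `i ∈ {1,2,3}` and `u ≠ v`; edges `(u,1) → (v,4)` of weight `0`
for `u ≠ v`; all other weights `⊤`. -/
def layer6 {V : Type*} [DecidableEq V] (w : V → V → ℤ) (M : ℤ) :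
    V × Fin 6 → V × Fin 6 → ℕ∞ := fun p q =>
  if p.1 = q.1 ∧ ((p.2 = 0 ∧ q.2 = 1) ∨ (p.2 = 4 ∧ q.2 = 5)) then ((10 * M).toNat : ℕ∞)
  else if p.1 ≠ q.1 ∧ 1 ≤ (p.2 : ℕ) ∧ (p.2 : ℕ) ≤ 3 ∧ (q.2 : ℕ) = (p.2 : ℕ) + 1 then
    ((10 * M + w p.1 q.1).toNat : ℕ∞)
  else if p.1 ≠ q.1 ∧ p.2 = 1 ∧ q.2 = 4 then 0
  else ⊤

section Edge

variable {V : Type*} [DecidableEq V] (w : V → V → ℤ) (M : ℤ)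

lemma L0 (x : V) (q : V × Fin 6) (h : layer6 w M (x,0) q ≠ ⊤) : q = (x,1) := by
  obtain ⟨q1, q2⟩ := q
  unfold layer6 at h
  fin_cases q2 <;> simp_all [(show ((0:Fin 6):ℕ) = 0 from rfl), (show ((1:Fin 6):ℕ) = 1 from rfl), (show ((2:Fin 6):ℕ) = 2 from rfl), (show ((3:Fin 6):ℕ) = 3 from rfl), (show ((4:Fin 6):ℕ) = 4 from rfl), (show ((5:Fin 6):ℕ) = 5 from rfl), ne_comm]

lemma L1 (x : V) (q : V × Fin 6) (h : layer6 w M (x,1) q ≠ ⊤) :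
    q.1 ≠ x ∧ (q.2 = 2 ∨ q.2 = 4) := by
  obtain ⟨q1, q2⟩ := q
  unfold layer6 at h
  fin_cases q2 <;> simp_all [(show ((0:Fin 6):ℕ) = 0 from rfl), (show ((1:Fin 6):ℕ) = 1 from rfl), (show ((2:Fin 6):ℕ) = 2 from rfl), (show ((3:Fin 6):ℕ) = 3 from rfl), (show ((4:Fin 6):ℕ) = 4 from rfl), (show ((5:Fin 6):ℕ) = 5 from rfl), ne_comm]

lemma L2 (x : V) (q : V × Fin 6) (h : layer6 w M (x,2) q ≠ ⊤) :
    q.1 ≠ x ∧ q.2 = 3 := by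
  obtain ⟨q1, q2⟩ := q
  unfold layer6 at h
  fin_cases q2 <;> simp_all [(show ((0:Fin 6):ℕ) = 0 from rfl), (show ((1:Fin 6):ℕ) = 1 from rfl), (show ((2:Fin 6):ℕ) = 2 from rfl), (show ((3:Fin 6):ℕ) = 3 from rfl), (show ((4:Fin 6):ℕ) = 4 from rfl), (show ((5:Fin 6):ℕ) = 5 from rfl), ne_comm]

lemma L3 (x : V) (q : V × Fin 6) (h : layer6 w M (x,3) q ≠ ⊤) :
    q.1 ≠ x ∧ q.2 = 4 := by
  obtain ⟨q1, q2⟩ := q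
  unfold layer6 at h
  fin_cases q2 <;> simp_all [(show ((0:Fin 6):ℕ) = 0 from rfl), (show ((1:Fin 6):ℕ) = 1 from rfl), (show ((2:Fin 6):ℕ) = 2 from rfl), (show ((3:Fin 6):ℕ) = 3 from rfl), (show ((4:Fin 6):ℕ) = 4 from rfl), (show ((5:Fin 6):ℕ) = 5 from rfl), ne_comm]

lemma L4 (x : V) (q : V × Fin 6) (h : layer6 w M (x,4) q ≠ ⊤) : q = (x,5) := by
  obtain ⟨q1, q2⟩ := q
  unfold layer6 at h
  fin_cases q2 <;> simp_all [(show ((0:Fin 6):ℕ) = 0 from rfl), (show ((1:Fin 6):ℕ) = 1 from rfl), (show ((2:Fin 6):ℕ) = 2 from rfl), (show ((3:Fin 6):ℕ) = 3 from rfl), (show ((4:Fin 6):ℕ) = 4 from rfl), (show ((5:Fin 6):ℕ) = 5 from rfl), ne_comm]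

lemma L5 (x : V) (q : V × Fin 6) : layer6 w M (x,5) q = ⊤ := by
  obtain ⟨q1, q2⟩ := q
  unfold layer6
  fin_cases q2 <;> simp_all [(show ((0:Fin 6):ℕ) = 0 from rfl), (show ((1:Fin 6):ℕ) = 1 from rfl), (show ((2:Fin 6):ℕ) = 2 from rfl), (show ((3:Fin 6):ℕ) = 3 from rfl), (show ((4:Fin 6):ℕ) = 4 from rfl), (show ((5:Fin 6):ℕ) = 5 from rfl), ne_comm]

lemma E0 (x : V) : layer6 w M (x,0) (x,1) = ((10*M).toNat : ℕ∞) := by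
  simp [layer6]

lemma E4 (x : V) : layer6 w M (x,4) (x,5) = ((10*M).toNat : ℕ∞) := by
  simp [layer6]

lemma E1 (x y : V) (h : x ≠ y) :
    layer6 w M (x,1) (y,2) = ((10*M + w x y).toNat : ℕ∞) := by
  simp [layer6, h, (show ((1:Fin 6):ℕ) = 1 from rfl), (show ((2:Fin 6):ℕ) = 2 from rfl)]

lemma E2 (x y : V) (h : x ≠ y) :
    layer6 w M (x,2) (y,3) = ((10*M + w x y).toNat : ℕ∞) := by
  simp [layer6, h, (show ((2:Fin 6):ℕ) = 2 from rfl), (show ((3:Fin 6):ℕ) = 3 from rfl)]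

lemma E3 (x y : V) (h : x ≠ y) :
    layer6 w M (x,3) (y,4) = ((10*M + w x y).toNat : ℕ∞) := by
  simp [layer6, h, (show ((3:Fin 6):ℕ) = 3 from rfl), (show ((4:Fin 6):ℕ) = 4 from rfl)]

end Edge

theorem stmt13 {V : Type*} [Fintype V] [DecidableEq V] (M : ℤ) (hM : 1 ≤ M)
    (w : V → V → ℤ) (hbound : ∀ u v : V, u ≠ v → |w u v| ≤ M) :
    ∀ v : V,
      gdist (layer6 w M) (v, 0) (v, 5) =
        ⨅ (u : V) (z : V) (_ : v ≠ u ∧ v ≠ z ∧ u ≠ z),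
          ((50 * M + w v u + w u z + w z v).toNat : ℕ∞) := by
  intro v
  set W := layer6 w M with hW
  refine le_antisymm ?_ ?_
  · refine le_iInf fun u => le_iInf fun z => le_iInf fun hd => ?_
    obtain ⟨hvu, hvz, huz⟩ := hd
    have key : gdist W (v,0) (v,5) ≤
        walkWeight W (v,0) [(v,1),(u,2),(z,3),(v,4),(v,5)] := by
      refine iInf_le_of_le [(v,1),(u,2),(z,3),(v,4),(v,5)] (iInf_le_of_le ?_ le_rfl)
      simp [List.getLast]
    refine key.trans (le_of_eq ?_)
    have h1 := abs_le.mp (hbound v u hvu)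
    have h2 := abs_le.mp (hbound u z huz)
    have h3 := abs_le.mp (hbound z v hvz.symm)
    simp only [walkWeight, hW, E0, E4, E1 w M v u hvu, E2 w M u z huz,
      E3 w M z v hvz.symm, add_zero]
    have : ((50 * M + w v u + w u z + w z v).toNat : ℕ) =
        (10*M).toNat + ((10*M + w v u).toNat + ((10*M + w u z).toNat +
          ((10*M + w z v).toNat + (10*M).toNat))) := by omega
    rw [this]
    push_cast
    ring
  · refine le_iInf fun p => le_iInf fun hp => ?_
    rcases p with _ | ⟨a, p⟩
    · simp [List.getLast] at hp
    by_cases h0 : W (v,0) a = ⊤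
    · simp [walkWeight, h0]
    obtain rfl := L0 w M v a h0
    rcases p with _ | ⟨b, p⟩
    · simp [List.getLast] at hp
    by_cases h1 : W (v,1) b = ⊤
    · simp [walkWeight, h1]
    obtain ⟨b1, b2⟩ := b
    obtain ⟨hb1, hb2⟩ := L1 w M v (b1, b2) h1
    simp only at hb1
    rcases hb2 with rfl | rfl
    · -- b = (b1, 2): the triangle route
      rcases p with _ | ⟨c, p⟩
      · simp [List.getLast] at hp
      by_cases h2 : W (b1,2) c = ⊤
      · simp [walkWeight, h2]
      obtain ⟨c1, c2⟩ := c
      obtain ⟨hc1, rfl⟩ := L2 w M b1 (c1, c2) h2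
      simp only at hc1
      rcases p with _ | ⟨d, p⟩
      · simp [List.getLast] at hp
      by_cases h3 : W (c1,3) d = ⊤
      · simp [walkWeight, h3]
      obtain ⟨d1, d2⟩ := d
      obtain ⟨hd1, rfl⟩ := L3 w M c1 (d1, d2) h3
      simp only at hd1
      rcases p with _ | ⟨e, p⟩
      · simp [List.getLast] at hp
      by_cases h4 : W (d1,4) e = ⊤
      · simp [walkWeight, h4]
      obtain rfl := L4 w M d1 e h4
      rcases p with _ | ⟨f, p⟩
      · -- the full path; extract d1 = v from hp
        simp [List.getLast] at hp
        obtain ⟨rfl, -⟩ := hp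
        -- now compute the weight and compare with the infimum
        have hvu : v ≠ b1 := fun h => hb1 h.symm
        have huz : b1 ≠ c1 := fun h => hc1 h.symm
        have hvz : v ≠ c1 := hd1
        refine iInf_le_of_le b1 (iInf_le_of_le c1
          (iInf_le_of_le ⟨hvu, hvz, huz⟩ (le_of_eq ?_)))
        have hh1 := abs_le.mp (hbound v b1 hvu)
        have hh2 := abs_le.mp (hbound b1 c1 huz)
        have hh3 := abs_le.mp (hbound c1 v hvz.symm)
        simp only [walkWeight, hW, E0, E4, E1 w M v b1 hvu, E2 w M b1 c1 huz,
          E3 w M c1 v hvz.symm, add_zero]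
        have : ((50 * M + w v b1 + w b1 c1 + w c1 v).toNat : ℕ) =
            (10*M).toNat + ((10*M + w v b1).toNat + ((10*M + w b1 c1).toNat +
              ((10*M + w c1 v).toNat + (10*M).toNat))) := by omega
        rw [this]
        push_cast
        ring
      · have : W (d1,5) f = ⊤ := L5 w M d1 f
        simp [walkWeight, this]
    · -- b = (b1, 4): dead end
      rcases p with _ | ⟨c, p⟩
      · simp [List.getLast] at hp
      by_cases h2 : W (b1,4) c = ⊤
      · simp [walkWeight, h2]
      obtain rfl := L4 w M b1 c h2
      rcases p with _ | ⟨d, p⟩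
      · simp [List.getLast] at hp
        exact absurd hp hb1
      · have : W (b1,5) d = ⊤ := L5 w M b1 d
        simp [walkWeight, this]
end

section
/- Let V be a finite type, M ≥ 1 an integer, w : V → V → ℤ with |w u v| ≤ M for all u ≠ v, and let w₄ be the four-layer graph on V × Fin 4. Then for every v : V, dist_{w₄}((v,0),(v,3)) < 3M if and only if v lies in a negative triangle of w, i.e., there exist u, z with v, u, z pairwise distinct and w v u + w u z + w z v < 0. -/
/-- Four-layer graph on `V × Fin 4` (parts A, B, C, D): edges `(u,i) → (v,i+1)` of weight
`M + w u v` for each `i ∈ {0,1,2}` and `u ≠ v`; all other weights `⊤`. -/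
def layer4 {V : Type*} [DecidableEq V] (w : V → V → ℤ) (M : ℤ) :
    V × Fin 4 → V × Fin 4 → ℕ∞ := fun p q =>
  if p.1 ≠ q.1 ∧ (q.2 : ℕ) = (p.2 : ℕ) + 1 then ((M + w p.1 q.1).toNat : ℕ∞) else ⊤

/-! A walk of finite weight climbs one layer per edge, so a walk from `(v, 0)` to `(v, 3)` is
a triangle `v → a → b → v` of distinct vertices, of weight `3M + (w v a + w a b + w b v)`.
The bound `|w| ≤ M` makes each `M + w` nonnegative, so `Int.toNat` loses nothing. -/

section Walks

variable {α : Type*} (w : α → α → ℕ∞)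

theorem gdist_lt_iff {u v : α} {c : ℕ∞} :
    gdist w u v < c ↔
      ∃ p : List α, (u :: p).getLast (List.cons_ne_nil u p) = v ∧ walkWeight w u p < c := by
  simp only [gdist, iInf_lt_iff, exists_prop]

theorem level_getLast_of_walkWeight_ne_top (f : α → ℕ)
    (hf : ∀ p q, w p q ≠ ⊤ → f q = f p + 1) :
    ∀ (u : α) (p : List α), walkWeight w u p ≠ ⊤ →
      f ((u :: p).getLast (List.cons_ne_nil u p)) = f u + p.length
  | u, [], _ => rfl
  | u, x :: xs, h => by
    rw [walkWeight, ne_eq, ENat.add_eq_top, not_or] at h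
    rw [List.getLast_cons (List.cons_ne_nil x xs),
      level_getLast_of_walkWeight_ne_top f hf x xs h.2, hf u x h.1, List.length_cons]
    ring

end Walks

section FourLayer

variable {V : Type*} [DecidableEq V] (w : V → V → ℤ) (M : ℤ)

theorem layer4_ne_top {p q : V × Fin 4} (h : layer4 w M p q ≠ ⊤) :
    p.1 ≠ q.1 ∧ (q.2 : ℕ) = p.2 + 1 ∧ layer4 w M p q = (M + w p.1 q.1).toNat := by
  unfold layer4 at h ⊢
  split_ifs at h ⊢ with hpq
  · exact ⟨hpq.1, hpq.2, rfl⟩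
  · exact absurd rfl h

theorem layer4_of_ne {u v : V} (huv : u ≠ v) {i j : Fin 4} (hij : (j : ℕ) = i + 1) :
    layer4 w M (u, i) (v, j) = (M + w u v).toNat :=
  if_pos ⟨huv, hij⟩

theorem gdist_layer4_lt_iff (v : V) (c : ℕ∞) :
    gdist (layer4 w M) (v, 0) (v, 3) < c ↔
      ∃ a b : V, v ≠ a ∧ a ≠ b ∧ b ≠ v ∧
        (((M + w v a).toNat + (M + w a b).toNat + (M + w b v).toNat : ℕ) : ℕ∞) < c := by
  rw [gdist_lt_iff]
  constructor
  · rintro ⟨p, hlast, hp⟩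
    have hlen : p.length = 3 := by
      have := level_getLast_of_walkWeight_ne_top (layer4 w M) (fun q => (q.2 : ℕ))
        (fun _ _ h => (layer4_ne_top w M h).2.1) (v, 0) p (ne_top_of_lt hp)
      rw [hlast] at this
      simpa using this.symm
    obtain ⟨a, b, d, rfl⟩ := List.length_eq_three.1 hlen
    obtain rfl : d = (v, 3) := hlast
    simp only [walkWeight, add_zero] at hp
    have hfin := ne_top_of_lt hp
    simp only [ne_eq, ENat.add_eq_top, not_or] at hfin
    obtain ⟨hva, -, e₁⟩ := layer4_ne_top w M hfin.1
    obtain ⟨hab, -, e₂⟩ := layer4_ne_top w M hfin.2.1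
    obtain ⟨hbv, -, e₃⟩ := layer4_ne_top w M hfin.2.2
    refine ⟨a.1, b.1, hva, hab, hbv, ?_⟩
    rwa [e₁, e₂, e₃, ← add_assoc, ← Nat.cast_add, ← Nat.cast_add] at hp
  · rintro ⟨a, b, hva, hab, hbv, hlt⟩
    refine ⟨[(a, 1), (b, 2), (v, 3)], rfl, ?_⟩
    simp only [walkWeight, add_zero]
    rwa [← add_assoc,
      layer4_of_ne w M hva (i := 0) (j := 1) rfl, layer4_of_ne w M hab (i := 1) (j := 2) rfl,
      layer4_of_ne w M hbv (i := 2) (j := 3) rfl, ← Nat.cast_add, ← Nat.cast_add]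

end FourLayer

theorem toNat_add_toNat_add_toNat_lt_iff {M x y z : ℤ} (hx : |x| ≤ M) (hy : |y| ≤ M)
    (hz : |z| ≤ M) :
    (M + x).toNat + (M + y).toNat + (M + z).toNat < (3 * M).toNat ↔ x + y + z < 0 := by
  rw [abs_le] at hx hy hz
  omega

theorem stmt16_general {V : Type*} [DecidableEq V] (M : ℤ)
    (w : V → V → ℤ) (hbound : ∀ u v : V, u ≠ v → |w u v| ≤ M) :
    ∀ v : V,
      gdist (layer4 w M) (v, 0) (v, 3) < ((3 * M).toNat : ℕ∞) ↔
        ∃ u z : V, v ≠ u ∧ v ≠ z ∧ u ≠ z ∧ w v u + w u z + w z v < 0 := by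
  intro v
  simp only [gdist_layer4_lt_iff, Nat.cast_lt]
  refine exists₂_congr fun a b => ⟨?_, ?_⟩
  · rintro ⟨hva, hab, hbv, hlt⟩
    refine ⟨hva, hbv.symm, hab, ?_⟩
    exact (toNat_add_toNat_add_toNat_lt_iff (hbound _ _ hva) (hbound _ _ hab)
      (hbound _ _ hbv)).1 hlt
  · rintro ⟨hva, hvb, hab, hneg⟩
    refine ⟨hva, hab, hvb.symm, ?_⟩
    exact (toNat_add_toNat_add_toNat_lt_iff (hbound _ _ hva) (hbound _ _ hab)
      (hbound _ _ hvb.symm)).2 hneg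

theorem stmt16 {V : Type*} [Fintype V] [DecidableEq V] (M : ℤ) (hM : 1 ≤ M)
    (w : V → V → ℤ) (hbound : ∀ u v : V, u ≠ v → |w u v| ≤ M) :
    ∀ v : V,
      gdist (layer4 w M) (v, 0) (v, 3) < ((3 * M).toNat : ℕ∞) ↔
        ∃ u z : V, v ≠ u ∧ v ≠ z ∧ u ≠ z ∧ w v u + w u z + w z v < 0 :=
  stmt16_general M w hbound
end
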